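/- arXiv:1908.10910 — 6 statements merged into one kernel-verified Lean document; each statement's English description precedes it below -/
import Mathlib

section
/- Let a be a nonzero real number and define φ(s) = (a·s + sqrt(1-s²))·exp(a·s/(a·s + sqrt(1-s²))) on an open interval where a·s + sqrt(1-s²) > 0 and |s| < 1. Then the function Q(s) = φ'(s)/(φ(s) - s·φ'(s)) equals 2a·sqrt(1-s²) + (a²-1)·s. -/
open Real

section MulExpDiv

variable (a : ℝ) {u : ℝ → ℝ} {u' s : ℝ}

theorem hasDerivAt_mul_exp_mul_div (hu : HasDerivAt u u' s) (hs : u s ≠ 0) :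
    HasDerivAt (fun x => u x * exp (a * x / u x))
      (exp (a * s / u s) / u s * (u s * u' + a * (u s - s * u'))) s := by
  have hdiv : HasDerivAt (fun x => a * x / u x) ((a * u s - a * s * u') / u s ^ 2) s := by
    simpa using ((hasDerivAt_id s).const_mul a).fun_div hu hs
  refine (hu.mul hdiv.exp).congr_deriv ?_
  field_simp

/-- For `φ = u · exp (a x / u)`, both `φ'` and `φ - x φ'` carry the factor `exp (a x / u) / u`,
which cancels in the quotient. -/
theorem deriv_div_sub_mul_deriv_of_mul_exp_mul_div (hu : HasDerivAt u u' s) (hs : u s ≠ 0) :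
    deriv (fun x => u x * exp (a * x / u x)) s /
        (u s * exp (a * s / u s) - s * deriv (fun x => u x * exp (a * x / u x)) s) =
      (u s * u' + a * (u s - s * u')) / ((u s - s * u') * (u s - a * s)) := by
  rw [(hasDerivAt_mul_exp_mul_div a hu hs).deriv]
  have hsub : u s * exp (a * s / u s) - s * (exp (a * s / u s) / u s * (u s * u' + a * (u s - s * u')))
      = exp (a * s / u s) / u s * ((u s - s * u') * (u s - a * s)) := by
    field_simp
    ring
  rw [hsub, mul_div_mul_left _ _ (div_ne_zero (exp_ne_zero _) hs)]

end MulExpDiv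

theorem hasDerivAt_sqrt_one_sub_sq {s : ℝ} (hs : |s| < 1) :
    HasDerivAt (fun x => √(1 - x ^ 2)) (-s / √(1 - s ^ 2)) s := by
  have hs2 : 0 < 1 - s ^ 2 := sub_pos.2 ((sq_lt_one_iff_abs_lt_one s).2 hs)
  convert ((hasDerivAt_pow 2 s).const_sub 1).sqrt hs2.ne' using 1
  ring

theorem stmt_2_general (a : ℝ) (φ : ℝ → ℝ)
    (hφ : ∀ s : ℝ, φ s =
      (a * s + Real.sqrt (1 - s ^ 2)) * Real.exp (a * s / (a * s + Real.sqrt (1 - s ^ 2))))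
    (s : ℝ) (hs : |s| < 1) (hpos : 0 < a * s + Real.sqrt (1 - s ^ 2)) :
    deriv φ s / (φ s - s * deriv φ s) =
      2 * a * Real.sqrt (1 - s ^ 2) + (a ^ 2 - 1) * s := by
  obtain rfl : φ = fun x => (a * x + √(1 - x ^ 2)) * exp (a * x / (a * x + √(1 - x ^ 2))) :=
    funext hφ
  have hu : HasDerivAt (fun x => a * x + √(1 - x ^ 2)) (a - s / √(1 - s ^ 2)) s := by
    refine (((hasDerivAt_id s).const_mul a).add (hasDerivAt_sqrt_one_sub_sq hs)).congr_deriv ?_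
    ring
  rw [deriv_div_sub_mul_deriv_of_mul_exp_mul_div a hu hpos.ne']
  set r := √(1 - s ^ 2)
  have hs2 : 0 < 1 - s ^ 2 := sub_pos.2 ((sq_lt_one_iff_abs_lt_one s).2 hs)
  have hr : r ≠ 0 := (sqrt_pos.mpr hs2).ne'
  have hr2 : r ^ 2 = 1 - s ^ 2 := sq_sqrt hs2.le
  -- With `u = a s + r`: `u - s u' = 1 / r` and `u - a s = r`, so the quotient is `u u' + a / r`.
  have hsub : a * s + r - s * (a - s / r) = 1 / r := by
    field_simp
    linear_combination hr2
  rw [hsub, add_sub_cancel_left]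
  field_simp
  linear_combination (-a) * hr2

theorem stmt_2 (a : ℝ) (ha : a ≠ 0) (φ : ℝ → ℝ)
    (hφ : ∀ s : ℝ, φ s =
      (a * s + Real.sqrt (1 - s ^ 2)) * Real.exp (a * s / (a * s + Real.sqrt (1 - s ^ 2))))
    (s : ℝ) (hs : |s| < 1) (hpos : 0 < a * s + Real.sqrt (1 - s ^ 2))
    (hden : φ s - s * deriv φ s ≠ 0) :
    deriv φ s / (φ s - s * deriv φ s) =
      2 * a * Real.sqrt (1 - s ^ 2) + (a ^ 2 - 1) * s :=
  stmt_2_general a φ hφ s hs hpos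
end

section
/- Let a ≠ 0, ±1 and define φ(s) = ((a+1)s + sqrt(1-s²))^((1+a)/2) · ((a-1)s + sqrt(1-s²))^((1-a)/2) on an open interval of s ∈ (-1,1) where both bases are positive. Then Q(s) = φ'(s)/(φ(s) - s·φ'(s)) equals 2a·sqrt(1-s²) + (a²-2)·s. -/
/-!
Write `w = √(1 - s²)`, `u = (a+1)s + w`, `v = (a-1)s + w` and `Q = 2aw + (a²-2)s`.
Since `w' = -s/w`, the logarithmic derivative of `φ = u^((1+a)/2) v^((1-a)/2)` is
`(1+a)/2 · u'/u + (1-a)/2 · v'/v = Q/(uv)`. On the other hand `w² = 1 - s²` gives `uv = 1 + sQ`,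
so `φ'/(φ - sφ') = (Q/(uv)) / (1 - sQ/(uv)) = Q/(uv - sQ) = Q`.
-/

open Real

theorem HasDerivAt.rpow_mul_rpow {f g : ℝ → ℝ} {f' g' x : ℝ} (p q : ℝ)
    (hf : HasDerivAt f f' x) (hg : HasDerivAt g g' x) (hfx : 0 < f x) (hgx : 0 < g x) :
    HasDerivAt (fun y => f y ^ p * g y ^ q)
      (f x ^ p * g x ^ q * (p * f' / f x + q * g' / g x)) x := by
  refine ((hf.rpow_const (p := p) (Or.inl hfx.ne')).mul
    (hg.rpow_const (p := q) (Or.inl hgx.ne'))).congr_deriv ?_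
  rw [rpow_sub_one hfx.ne', rpow_sub_one hgx.ne']
  field_simp

theorem weighted_log_deriv_eq (a s w : ℝ) (hw : w ≠ 0)
    (hu : (a + 1) * s + w ≠ 0) (hv : (a - 1) * s + w ≠ 0) :
    (1 + a) / 2 * ((a + 1) - s / w) / ((a + 1) * s + w) +
      (1 - a) / 2 * ((a - 1) - s / w) / ((a - 1) * s + w) =
    (2 * a * w + (a ^ 2 - 2) * s) / (((a + 1) * s + w) * ((a - 1) * s + w)) := by
  rw [div_add_div _ _ hu hv]
  congr 1
  field_simp
  ring

theorem stmt_5_general (a : ℝ) (φ : ℝ → ℝ)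
    (hφ : ∀ s : ℝ, φ s =
      ((a + 1) * s + Real.sqrt (1 - s ^ 2)) ^ ((1 + a) / 2) *
      ((a - 1) * s + Real.sqrt (1 - s ^ 2)) ^ ((1 - a) / 2))
    (s : ℝ) (hs : |s| < 1)
    (hpos1 : 0 < (a + 1) * s + Real.sqrt (1 - s ^ 2))
    (hpos2 : 0 < (a - 1) * s + Real.sqrt (1 - s ^ 2))
    (hden : φ s - s * deriv φ s ≠ 0) :
    deriv φ s / (φ s - s * deriv φ s) =
      2 * a * Real.sqrt (1 - s ^ 2) + (a ^ 2 - 2) * s := by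
  have hs2 : 0 < 1 - s ^ 2 := by nlinarith [abs_lt.mp hs]
  have hsqrt := hasDerivAt_sqrt_one_sub_sq hs
  have hw2 : √(1 - s ^ 2) ^ 2 = 1 - s ^ 2 := sq_sqrt hs2.le
  have hw0 : √(1 - s ^ 2) ≠ 0 := sqrt_ne_zero'.mpr hs2
  set w := √(1 - s ^ 2)
  set Q := 2 * a * w + (a ^ 2 - 2) * s
  have hlin (c : ℝ) : HasDerivAt (fun x => c * x + √(1 - x ^ 2)) (c - s / w) s :=
    (((hasDerivAt_id' s).const_mul c).add hsqrt).congr_deriv (by ring)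
  have hφ' : HasDerivAt φ (φ s * (Q / (((a + 1) * s + w) * ((a - 1) * s + w)))) s := by
    convert (hlin (a + 1)).rpow_mul_rpow ((1 + a) / 2) ((1 - a) / 2) (hlin (a - 1)) hpos1 hpos2
      using 1
    · exact funext hφ
    · rw [hφ s, ← weighted_log_deriv_eq a s w hw0 hpos1.ne' hpos2.ne']
  have huv : ((a + 1) * s + w) * ((a - 1) * s + w) = 1 + s * Q := by
    linear_combination hw2
  have hQ : 1 + s * Q ≠ 0 := huv ▸ (mul_pos hpos1 hpos2).ne'
  rw [hφ'.deriv, huv] at hden ⊢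
  rw [div_eq_iff hden]
  linear_combination φ s * Q * inv_mul_cancel₀ hQ

theorem stmt_5 (a : ℝ) (ha : a ≠ 0) (ha1 : a ≠ 1) (ha2 : a ≠ -1) (φ : ℝ → ℝ)
    (hφ : ∀ s : ℝ, φ s =
      ((a + 1) * s + Real.sqrt (1 - s ^ 2)) ^ ((1 + a) / 2) *
      ((a - 1) * s + Real.sqrt (1 - s ^ 2)) ^ ((1 - a) / 2))
    (s : ℝ) (hs : |s| < 1)
    (hpos1 : 0 < (a + 1) * s + Real.sqrt (1 - s ^ 2))
    (hpos2 : 0 < (a - 1) * s + Real.sqrt (1 - s ^ 2))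
    (hden : φ s - s * deriv φ s ≠ 0) :
    deriv φ s / (φ s - s * deriv φ s) =
      2 * a * Real.sqrt (1 - s ^ 2) + (a ^ 2 - 2) * s :=
  stmt_5_general a φ hφ s hs hpos1 hpos2 hden
end

section
/- Let a ≠ 0 and define φ(s) = a·s + (1-s²)/(a·s + 2·sqrt(1-s²)) for |s| < 1 on an interval where a·s + 2·sqrt(1-s²) > 0. Then Q(s) = φ'(s)/(φ(s) - s·φ'(s)) equals (3a/2)·sqrt(1-s²) + ((a²-2)/2)·s. -/
open Real

/-!
Write `t = √(1 - s²)` and `D = a s + 2 t`. Differentiating and using `s² + t² = 1` gives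
`φ' = a - (a + a s² + 2 s t) / D²`, and then the numerator and the denominator of `Q` share
the factor `(a s + t) / D²`:
`φ - s φ' = 2 (a s + t) / D²` and `φ' = (a s + t) (3 a t + (a² - 2) s) / D²`.
-/

section Algebra

variable {K : Type*} [Field K] {a s t : K}

theorem phi_sub_mul_deriv_eq (hD : a * s + 2 * t ≠ 0) :
    a * s + (1 - s ^ 2) / (a * s + 2 * t) -
        s * (a - (a + a * s ^ 2 + 2 * s * t) / (a * s + 2 * t) ^ 2) =
      2 * (a * s + t) / (a * s + 2 * t) ^ 2 := by
  field_simp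
  ring

theorem phi_deriv_eq_mul (h : s ^ 2 + t ^ 2 = 1) (hD : a * s + 2 * t ≠ 0) :
    a - (a + a * s ^ 2 + 2 * s * t) / (a * s + 2 * t) ^ 2 =
      (a * s + t) * (3 * a * t + (a ^ 2 - 2) * s) / (a * s + 2 * t) ^ 2 := by
  field_simp
  linear_combination a * h

end Algebra

theorem one_sub_sq_pos_of_abs_lt_one {α : Type*} [Ring α] [LinearOrder α] [IsStrictOrderedRing α]
    {s : α} (hs : |s| < 1) : 0 < 1 - s ^ 2 :=
  sub_pos.2 ((sq_lt_one_iff_abs_lt_one s).2 hs)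

theorem hasDerivAt_phi {a s : ℝ} (hs : |s| < 1) (hD : a * s + 2 * √(1 - s ^ 2) ≠ 0) :
    HasDerivAt (fun x => a * x + (1 - x ^ 2) / (a * x + 2 * √(1 - x ^ 2)))
      (a - (a + a * s ^ 2 + 2 * s * √(1 - s ^ 2)) / (a * s + 2 * √(1 - s ^ 2)) ^ 2) s := by
  have h := one_sub_sq_pos_of_abs_lt_one hs
  have ht0 : √(1 - s ^ 2) ≠ 0 := (sqrt_pos.2 h).ne'
  have ht : √(1 - s ^ 2) ^ 2 = 1 - s ^ 2 := sq_sqrt h.le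
  have hnum := (hasDerivAt_pow 2 s).const_sub 1
  have hdenom := ((hasDerivAt_id' s).const_mul a).add ((hasDerivAt_sqrt_one_sub_sq hs).const_mul 2)
  refine (((hasDerivAt_id' s).const_mul a).add (hnum.div hdenom hD)).congr_deriv ?_
  simp only [Pi.add_apply]
  field_simp
  linear_combination (-2 * s) * ht

theorem stmt_7_general (a : ℝ) (φ : ℝ → ℝ)
    (hφ : ∀ s : ℝ, φ s =
      a * s + (1 - s ^ 2) / (a * s + 2 * Real.sqrt (1 - s ^ 2)))
    (s : ℝ) (hs : |s| < 1)
    (hpos : 0 < a * s + 2 * Real.sqrt (1 - s ^ 2))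
    (hden : φ s - s * deriv φ s ≠ 0) :
    deriv φ s / (φ s - s * deriv φ s) =
      (3 * a / 2) * Real.sqrt (1 - s ^ 2) + ((a ^ 2 - 2) / 2) * s := by
  obtain rfl : φ = _ := funext hφ
  have hD := hpos.ne'
  have hst : s ^ 2 + √(1 - s ^ 2) ^ 2 = 1 := by
    rw [sq_sqrt (one_sub_sq_pos_of_abs_lt_one hs).le]
    ring
  rw [(hasDerivAt_phi hs hD).deriv, phi_sub_mul_deriv_eq hD] at hden ⊢
  rw [phi_deriv_eq_mul hst hD]
  have hfactor : a * s + √(1 - s ^ 2) ≠ 0 := by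
    rintro h0
    simp [h0] at hden
  rw [div_div_div_cancel_right₀ (pow_ne_zero 2 hD), mul_comm 2, mul_div_mul_left _ _ hfactor]
  ring

theorem stmt_7 (a : ℝ) (ha : a ≠ 0) (φ : ℝ → ℝ)
    (hφ : ∀ s : ℝ, φ s =
      a * s + (1 - s ^ 2) / (a * s + 2 * Real.sqrt (1 - s ^ 2)))
    (s : ℝ) (hs : |s| < 1)
    (hpos : 0 < a * s + 2 * Real.sqrt (1 - s ^ 2))
    (hden : φ s - s * deriv φ s ≠ 0) :
    deriv φ s / (φ s - s * deriv φ s) =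
      (3 * a / 2) * Real.sqrt (1 - s ^ 2) + ((a ^ 2 - 2) / 2) * s :=
  stmt_7_general a φ hφ s hs hpos hden
end

section
/- With the setup of the previous statement (G1, G2, G3, P, and F = f(x1)·(y1 + sqrt(y2·y3))·exp(y1/(y1 + sqrt(y2·y3)))), the horizontal covariance equation ∂F/∂x1 - (∂G1/∂y1)·(∂F/∂y1) - (∂G2/∂y1)·(∂F/∂y2) - (∂G3/∂y1)·(∂F/∂y3) = 0 holds, on the open set where y2·y3 > 0 and y1 + sqrt(y2·y3) > 0. -/
open Real

theorem stmt_16 (f : ℝ → ℝ) (hf : ContDiff ℝ (⊤ : ℕ∞) f) (hfpos : ∀ x, 0 < f x)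
    (P G1 G2 G3 : ℝ → ℝ → ℝ → ℝ → ℝ) (F : ℝ → ℝ → ℝ → ℝ → ℝ)
    (hP : ∀ x1 y1 y2 y3 : ℝ, P x1 y1 y2 y3 =
      (y1 + Real.sqrt (y2 * y3)) * deriv f x1 / f x1)
    (hG1 : ∀ x1 y1 y2 y3 : ℝ, G1 x1 y1 y2 y3 =
      (y1 ^ 2 - y2 * y3) * deriv f x1 / (2 * f x1))
    (hG2 : ∀ x1 y1 y2 y3 : ℝ, G2 x1 y1 y2 y3 = P x1 y1 y2 y3 * y2)
    (hG3 : ∀ x1 y1 y2 y3 : ℝ, G3 x1 y1 y2 y3 = P x1 y1 y2 y3 * y3)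
    (hF : ∀ x1 y1 y2 y3 : ℝ, F x1 y1 y2 y3 =
      f x1 * (y1 + Real.sqrt (y2 * y3)) *
        Real.exp (y1 / (y1 + Real.sqrt (y2 * y3))))
    (x1 y1 y2 y3 : ℝ) (hyy : 0 < y2 * y3)
    (hpos : 0 < y1 + Real.sqrt (y2 * y3)) :
    deriv (fun t => F t y1 y2 y3) x1
      - deriv (fun t => G1 x1 t y2 y3) y1 * deriv (fun t => F x1 t y2 y3) y1
      - deriv (fun t => G2 x1 t y2 y3) y1 * deriv (fun t => F x1 y1 t y3) y2
      - deriv (fun t => G3 x1 t y2 y3) y1 * deriv (fun t => F x1 y1 y2 t) y3 = 0 := by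
  have hyy' : y2 * y3 ≠ 0 := ne_of_gt hyy
  set s : ℝ := Real.sqrt (y2 * y3) with hs
  have hs0 : 0 < s := Real.sqrt_pos.mpr hyy
  have hss : s * s = y2 * y3 := Real.mul_self_sqrt hyy.le
  have hne : y1 + s ≠ 0 := ne_of_gt hpos
  have hc : f x1 ≠ 0 := ne_of_gt (hfpos x1)
  set c : ℝ := f x1
  set d : ℝ := deriv f x1
  set E : ℝ := Real.exp (y1 / (y1 + s)) with hE
  simp only [hF, hG1, hG2, hG3, hP, ← hs]
  -- derivative in x1
  have hA : HasDerivAt (fun t => f t * (y1 + s) * Real.exp (y1 / (y1 + s)))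
      (d * ((y1 + s) * E)) x1 := by
    simpa [mul_assoc, hE] using
      ((hf.differentiable (by simp) x1).hasDerivAt.mul_const ((y1 + s) * E))
  -- derivative of G1 in y1
  have hB : HasDerivAt (fun t => (t ^ 2 - y2 * y3) * d / (2 * c))
      ((2 * y1) * (d / (2 * c))) y1 := by
    have := ((hasDerivAt_pow 2 y1).sub_const (y2 * y3)).mul_const (d / (2 * c))
    simpa [mul_div_assoc] using this
  -- derivative of F in y1
  have hu : HasDerivAt (fun t : ℝ => t + s) 1 y1 := (hasDerivAt_id y1).add_const s
  have hq : HasDerivAt (fun t : ℝ => t / (t + s))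
      ((1 * (y1 + s) - y1 * 1) / (y1 + s) ^ 2) y1 :=
    (hasDerivAt_id y1).div hu hne
  have he : HasDerivAt (fun t : ℝ => Real.exp (t / (t + s)))
      (E * ((1 * (y1 + s) - y1 * 1) / (y1 + s) ^ 2)) y1 := by
    simpa [hE] using hq.exp
  have hC : HasDerivAt (fun t => c * (t + s) * Real.exp (t / (t + s)))
      (c * 1 * E + c * (y1 + s) * (E * ((1 * (y1 + s) - y1 * 1) / (y1 + s) ^ 2))) y1 := by
    simpa [hE, Pi.mul_def] using (hu.const_mul c).mul he
  -- derivative of G2, G3 in y1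
  have hD : HasDerivAt (fun t => (t + s) * d / c * y2) (1 * (d / c) * y2) y1 := by
    have := (hu.mul_const (d / c)).mul_const y2
    simpa [mul_div_assoc] using this
  have hD' : HasDerivAt (fun t => (t + s) * d / c * y3) (1 * (d / c) * y3) y1 := by
    have := (hu.mul_const (d / c)).mul_const y3
    simpa [mul_div_assoc] using this
  -- derivative of F in y2
  have hm2 : HasDerivAt (fun t : ℝ => t * y3) (1 * y3) y2 := (hasDerivAt_id y2).mul_const y3
  have hsq2 : HasDerivAt (fun t : ℝ => Real.sqrt (t * y3))
      (1 / (2 * s) * (1 * y3)) y2 := by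
    simpa [hs, Function.comp_def] using (Real.hasDerivAt_sqrt hyy').comp y2 hm2
  have hadd2 : HasDerivAt (fun t : ℝ => y1 + Real.sqrt (t * y3))
      (1 / (2 * s) * (1 * y3)) y2 := hsq2.const_add y1
  have hq2 : HasDerivAt (fun t : ℝ => y1 / (y1 + Real.sqrt (t * y3)))
      ((0 * (y1 + s) - y1 * (1 / (2 * s) * (1 * y3))) / (y1 + s) ^ 2) y2 := by
    simpa [hs, Pi.div_def] using (hasDerivAt_const y2 y1).div hadd2 (by simpa [hs] using hne)
  have he2 : HasDerivAt (fun t : ℝ => Real.exp (y1 / (y1 + Real.sqrt (t * y3))))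
      (E * ((0 * (y1 + s) - y1 * (1 / (2 * s) * (1 * y3))) / (y1 + s) ^ 2)) y2 := by
    simpa [hE, hs] using hq2.exp
  have hE2 : HasDerivAt (fun t => c * (y1 + Real.sqrt (t * y3)) *
      Real.exp (y1 / (y1 + Real.sqrt (t * y3))))
      (c * (1 / (2 * s) * (1 * y3)) * E +
        c * (y1 + s) * (E * ((0 * (y1 + s) - y1 * (1 / (2 * s) * (1 * y3))) / (y1 + s) ^ 2)))
      y2 := by
    simpa [hE, hs, Pi.mul_def] using (hadd2.const_mul c).mul he2
  -- derivative of F in y3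
  have hm3 : HasDerivAt (fun t : ℝ => y2 * t) (y2 * 1) y3 := (hasDerivAt_id y3).const_mul y2
  have hsq3 : HasDerivAt (fun t : ℝ => Real.sqrt (y2 * t))
      (1 / (2 * s) * (y2 * 1)) y3 := by
    simpa [hs, Function.comp_def] using (Real.hasDerivAt_sqrt hyy').comp y3 hm3
  have hadd3 : HasDerivAt (fun t : ℝ => y1 + Real.sqrt (y2 * t))
      (1 / (2 * s) * (y2 * 1)) y3 := hsq3.const_add y1
  have hq3 : HasDerivAt (fun t : ℝ => y1 / (y1 + Real.sqrt (y2 * t)))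
      ((0 * (y1 + s) - y1 * (1 / (2 * s) * (y2 * 1))) / (y1 + s) ^ 2) y3 := by
    simpa [hs, Pi.div_def] using (hasDerivAt_const y3 y1).div hadd3 (by simpa [hs] using hne)
  have he3 : HasDerivAt (fun t : ℝ => Real.exp (y1 / (y1 + Real.sqrt (y2 * t))))
      (E * ((0 * (y1 + s) - y1 * (1 / (2 * s) * (y2 * 1))) / (y1 + s) ^ 2)) y3 := by
    simpa [hE, hs] using hq3.exp
  have hE3 : HasDerivAt (fun t => c * (y1 + Real.sqrt (y2 * t)) *
      Real.exp (y1 / (y1 + Real.sqrt (y2 * t))))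
      (c * (1 / (2 * s) * (y2 * 1)) * E +
        c * (y1 + s) * (E * ((0 * (y1 + s) - y1 * (1 / (2 * s) * (y2 * 1))) / (y1 + s) ^ 2)))
      y3 := by
    simpa [hE, hs, Pi.mul_def] using (hadd3.const_mul c).mul he3
  rw [hA.deriv, hB.deriv, hC.deriv, hD.deriv, hD'.deriv, hE2.deriv, hE3.deriv]
  have hy2 : y2 ≠ 0 := left_ne_zero_of_mul hyy'
  have hy3 : y3 = s * s / y2 := by
    rw [eq_div_iff hy2]; linear_combination -hss
  rw [hy3]
  field_simp
  ring
end

section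
/- With G2 = P·y2, G3 = P·y3 where P = (y1 + sqrt(y2·y3))·f'(x1)/f(x1), and F = f(x1)·(y1 + sqrt(y2·y3))·exp(y1/(y1 + sqrt(y2·y3))), the Landsberg-type contraction (∂F/∂y2)·∂³G2/∂y2³ + (∂F/∂y3)·∂³G3/∂y2³ = 0 holds on the open set where y2·y3 > 0 and y1 + sqrt(y2·y3) > 0. -/
open Real


private lemma iter3_aux (g : ℝ → ℝ) : iteratedDeriv 3 g = deriv (deriv (deriv g)) := by
  rw [iteratedDeriv_succ, iteratedDeriv_succ, iteratedDeriv_one]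

private lemma key_alg (u c y1 y2 y3 E Kf : ℝ) (hu : 0 < u) (hA : y1 + u ≠ 0)
    (hu2 : u * u = y2 * y3) :
    (Kf * (y3 / (2 * u)) * E + Kf * (y1 + u) * (E * ((0 * (y1 + u) - y1 * (y3 / (2 * u))) / (y1 + u) ^ 2))) *
        (3 * c * y3 / 4 * (-(y3 / (2 * u)) / u ^ 2)) +
      (Kf * (y2 / (2 * u)) * E + Kf * (y1 + u) * (E * ((0 * (y1 + u) - y1 * (y2 / (2 * u))) / (y1 + u) ^ 2))) *
        (-(c * y3 ^ 3 / 4) * (3 * u⁻¹ ^ 2 * (-(y3 / (2 * u)) / u ^ 2))) = 0 := by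
  have h1 : u ≠ 0 := hu.ne'
  field_simp
  ring_nf
  linear_combination (-3*Kf*y3^3*E*c*u) * hu2

theorem stmt_17 (f : ℝ → ℝ) (hf : ContDiff ℝ (⊤ : ℕ∞) f) (hfpos : ∀ x, 0 < f x)
    (P G2 G3 : ℝ → ℝ → ℝ → ℝ → ℝ) (F : ℝ → ℝ → ℝ → ℝ → ℝ)
    (hP : ∀ x1 y1 y2 y3 : ℝ, P x1 y1 y2 y3 =
      (y1 + Real.sqrt (y2 * y3)) * deriv f x1 / f x1)
    (hG2 : ∀ x1 y1 y2 y3 : ℝ, G2 x1 y1 y2 y3 = P x1 y1 y2 y3 * y2)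
    (hG3 : ∀ x1 y1 y2 y3 : ℝ, G3 x1 y1 y2 y3 = P x1 y1 y2 y3 * y3)
    (hF : ∀ x1 y1 y2 y3 : ℝ, F x1 y1 y2 y3 =
      f x1 * (y1 + Real.sqrt (y2 * y3)) *
        Real.exp (y1 / (y1 + Real.sqrt (y2 * y3))))
    (x1 y1 y2 y3 : ℝ) (hyy : 0 < y2 * y3)
    (hpos : 0 < y1 + Real.sqrt (y2 * y3)) :
    deriv (fun t => F x1 y1 t y3) y2 * iteratedDeriv 3 (fun t => G2 x1 y1 t y3) y2 +
      deriv (fun t => F x1 y1 y2 t) y3 * iteratedDeriv 3 (fun t => G3 x1 y1 t y3) y2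
      = 0 := by
  have hf1 : f x1 ≠ 0 := (hfpos x1).ne'
  have hy3 : y3 ≠ 0 := by rintro rfl; simp at hyy
  have hy2 : y2 ≠ 0 := by rintro rfl; simp at hyy
  set u := Real.sqrt (y2 * y3) with hu_def
  have hu : 0 < u := Real.sqrt_pos.mpr hyy
  have hu2 : u * u = y2 * y3 := Real.mul_self_sqrt hyy.le
  have hA : y1 + u ≠ 0 := ne_of_gt hpos
  set c := deriv f x1 / f x1 with hc
  set S : Set ℝ := {t | 0 < t * y3} with hS_def
  have hS : IsOpen S := isOpen_lt continuous_const (continuous_id.mul continuous_const)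
  have hy2S : y2 ∈ S := by simpa [hS_def, mul_comm] using hyy
  have hsq : ∀ t ∈ S, (0 < Real.sqrt (t * y3)) ∧
      Real.sqrt (t * y3) * Real.sqrt (t * y3) = t * y3 := by
    intro t ht
    exact ⟨Real.sqrt_pos.mpr ht, Real.mul_self_sqrt ht.le⟩
  -- derivative of t ↦ sqrt (t*y3)
  have hs : ∀ t ∈ S, HasDerivAt (fun t => Real.sqrt (t * y3))
      (y3 / (2 * Real.sqrt (t * y3))) t := by
    intro t ht
    have h := (((hasDerivAt_id t).mul_const y3).sqrt (ne_of_gt ht))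
    simpa using h
  -- explicit functions for the G2 chain
  set A0 : ℝ → ℝ := fun t => ((y1 + Real.sqrt (t * y3)) * t) * c with hA0
  set A1 : ℝ → ℝ := fun t => c * y1 + (3/2) * c * Real.sqrt (t * y3) with hA1
  set A2 : ℝ → ℝ := fun t => (3 * c * y3 / 4) * (Real.sqrt (t * y3))⁻¹ with hA2
  have hA0d : ∀ t ∈ S, HasDerivAt A0 (A1 t) t := by
    intro t ht
    obtain ⟨h1, h2⟩ := hsq t ht
    have h := (((hasDerivAt_const t y1).add (hs t ht)).mul (hasDerivAt_id t)).mul_const c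
    refine h.congr_deriv (Eq.symm ?_)
    simp only [hA1, Pi.add_apply, id]
    field_simp
    linear_combination c * h2
  have hA1d : ∀ t ∈ S, HasDerivAt A1 (A2 t) t := by
    intro t ht
    obtain ⟨h1, h2⟩ := hsq t ht
    have h := ((hs t ht).const_mul ((3:ℝ)/2 * c)).const_add (c * y1)
    refine h.congr_deriv (Eq.symm ?_)
    simp only [hA2]
    have : y3 / (2 * Real.sqrt (t * y3)) = y3 * 2⁻¹ * (Real.sqrt (t * y3))⁻¹ := by
      rw [div_eq_mul_inv, mul_inv]; ring
    rw [this]; ring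
  have hA2d : ∀ t ∈ S, HasDerivAt A2
      ((3 * c * y3 / 4) * (-(y3 / (2 * Real.sqrt (t * y3))) / (Real.sqrt (t * y3))^2)) t := by
    intro t ht
    obtain ⟨h1, h2⟩ := hsq t ht
    exact ((hs t ht).inv h1.ne').const_mul _
  -- explicit functions for the G3 chain
  set B0 : ℝ → ℝ := fun t => (y1 + Real.sqrt (t * y3)) * (c * y3) with hB0
  set B1 : ℝ → ℝ := fun t => (c * y3 * y3 / 2) * (Real.sqrt (t * y3))⁻¹ with hB1
  set B2 : ℝ → ℝ := fun t => (-(c * y3^3 / 4)) * ((Real.sqrt (t * y3))⁻¹)^3 with hB2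
  have hB0d : ∀ t ∈ S, HasDerivAt B0 (B1 t) t := by
    intro t ht
    obtain ⟨h1, h2⟩ := hsq t ht
    have h := ((hasDerivAt_const t y1).add (hs t ht)).mul_const (c * y3)
    refine h.congr_deriv (Eq.symm ?_)
    simp only [hB1]
    field_simp
    ring
  have hB1d : ∀ t ∈ S, HasDerivAt B1
      ((c * y3 * y3 / 2) * (-(y3 / (2 * Real.sqrt (t * y3))) / (Real.sqrt (t * y3))^2)) t := by
    intro t ht
    obtain ⟨h1, h2⟩ := hsq t ht
    exact ((hs t ht).inv h1.ne').const_mul _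
  have hB2d : ∀ t ∈ S, HasDerivAt B2
      ((-(c * y3^3 / 4)) * ((3:ℕ) * ((Real.sqrt (t * y3))⁻¹)^2 *
        (-(y3 / (2 * Real.sqrt (t * y3))) / (Real.sqrt (t * y3))^2))) t := by
    intro t ht
    obtain ⟨h1, h2⟩ := hsq t ht
    exact (((hs t ht).inv h1.ne').pow 3).const_mul _
  -- identify the G functions
  have hg2fun : (fun t => G2 x1 y1 t y3) = A0 := by
    funext t; rw [hG2, hP]; simp only [hA0, hc]; ring
  have hg3fun : (fun t => G3 x1 y1 t y3) = B0 := by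
    funext t; rw [hG3, hP]; simp only [hB0, hc]; ring
  -- compute iterated derivatives via eventual equalities on S
  have hd1A : Set.EqOn (deriv A0) A1 S := fun t ht => (hA0d t ht).deriv
  have hd2A : Set.EqOn (deriv (deriv A0)) A2 S := by
    intro t ht
    have : deriv (deriv A0) t = deriv A1 t :=
      Filter.EventuallyEq.deriv_eq (Filter.eventuallyEq_of_mem (hS.mem_nhds ht) hd1A)
    rw [this]; exact (hA1d t ht).deriv
  have hd3A : deriv (deriv (deriv A0)) y2 =
      (3 * c * y3 / 4) * (-(y3 / (2 * u)) / u^2) := by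
    have : deriv (deriv (deriv A0)) y2 = deriv A2 y2 :=
      Filter.EventuallyEq.deriv_eq (Filter.eventuallyEq_of_mem (hS.mem_nhds hy2S) hd2A)
    rw [this, (hA2d y2 hy2S).deriv, ← hu_def]
  have hd1B : Set.EqOn (deriv B0) B1 S := fun t ht => (hB0d t ht).deriv
  have hd2B : Set.EqOn (deriv (deriv B0)) B2 S := by
    intro t ht
    have : deriv (deriv B0) t = deriv B1 t :=
      Filter.EventuallyEq.deriv_eq (Filter.eventuallyEq_of_mem (hS.mem_nhds ht) hd1B)
    rw [this]
    have := (hB1d t ht).deriv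
    rw [this]
    simp only [hB2]
    have := (hsq t ht).1
    field_simp
    ring
  have hd3B : deriv (deriv (deriv B0)) y2 =
      (-(c * y3^3 / 4)) * ((3:ℝ) * (u⁻¹)^2 * (-(y3 / (2 * u)) / u^2)) := by
    have : deriv (deriv (deriv B0)) y2 = deriv B2 y2 :=
      Filter.EventuallyEq.deriv_eq (Filter.eventuallyEq_of_mem (hS.mem_nhds hy2S) hd2B)
    rw [this, (hB2d y2 hy2S).deriv, ← hu_def]
    push_cast
    ring
  have hiter2 : iteratedDeriv 3 (fun t => G2 x1 y1 t y3) y2 =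
      (3 * c * y3 / 4) * (-(y3 / (2 * u)) / u^2) := by
    rw [hg2fun, iter3_aux]
    exact hd3A
  have hiter3 : iteratedDeriv 3 (fun t => G3 x1 y1 t y3) y2 =
      (-(c * y3^3 / 4)) * ((3:ℝ) * (u⁻¹)^2 * (-(y3 / (2 * u)) / u^2)) := by
    rw [hg3fun, iter3_aux]
    exact hd3B
  -- derivatives of F
  have hw2 : HasDerivAt (fun t => Real.sqrt (t * y3)) (y3 / (2 * u)) y2 := by
    simpa [hu_def] using hs y2 hy2S
  have hw3 : HasDerivAt (fun t => Real.sqrt (y2 * t)) (y2 / (2 * u)) y3 := by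
    have h := (((hasDerivAt_id y3).const_mul y2).sqrt (ne_of_gt hyy))
    simpa [hu_def] using h
  have hF2fun : (fun t => F x1 y1 t y3) =
      (fun t => f x1 * (y1 + Real.sqrt (t * y3)) * Real.exp (y1 / (y1 + Real.sqrt (t * y3)))) := by
    funext t; rw [hF]
  have hF3fun : (fun t => F x1 y1 y2 t) =
      (fun t => f x1 * (y1 + Real.sqrt (y2 * t)) * Real.exp (y1 / (y1 + Real.sqrt (y2 * t)))) := by
    funext t; rw [hF]
  have hFd : ∀ (g : ℝ → ℝ) (g' x : ℝ), HasDerivAt g g' x → g x = u →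
      HasDerivAt (fun t => f x1 * (y1 + g t) * Real.exp (y1 / (y1 + g t)))
        (f x1 * g' * Real.exp (y1 / (y1 + u)) +
          f x1 * (y1 + u) * (Real.exp (y1 / (y1 + u)) *
            ((0 * (y1 + u) - y1 * g') / (y1 + u)^2))) x := by
    intro g g' x hg hgx
    have hw : HasDerivAt (fun t => y1 + g t) g' x := (hg.const_add y1)
    have hq : HasDerivAt (fun t => y1 / (y1 + g t))
        ((0 * (y1 + g x) - y1 * g') / (y1 + g x)^2) x :=
      (hasDerivAt_const x y1).div hw (by rw [hgx]; exact hA)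
    have he := hq.exp
    have h := ((hw.const_mul (f x1)).mul he)
    rw [hgx] at h
    exact h
  have hDF2 : deriv (fun t => F x1 y1 t y3) y2 =
      f x1 * (y3 / (2 * u)) * Real.exp (y1 / (y1 + u)) +
        f x1 * (y1 + u) * (Real.exp (y1 / (y1 + u)) *
          ((0 * (y1 + u) - y1 * (y3 / (2 * u))) / (y1 + u)^2)) := by
    rw [hF2fun]
    exact (hFd _ _ _ hw2 rfl).deriv
  have hDF3 : deriv (fun t => F x1 y1 y2 t) y3 =
      f x1 * (y2 / (2 * u)) * Real.exp (y1 / (y1 + u)) +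
        f x1 * (y1 + u) * (Real.exp (y1 / (y1 + u)) *
          ((0 * (y1 + u) - y1 * (y2 / (2 * u))) / (y1 + u)^2)) := by
    rw [hF3fun]
    exact (hFd _ _ _ hw3 rfl).deriv
  rw [hDF2, hDF3, hiter2, hiter3]
  have := key_alg u c y1 y2 y3 (Real.exp (y1 / (y1 + u))) (f x1) hu hA hu2
  linarith [this]
end

section
/- Let a ≠ 0 and on the open set of ℝ³ where y2·y3 > 0 and a·y1 + 2·sqrt(y2·y3) > 0, define F = f(x1)·(a·y1 + y2·y3/(a·y1 + 2·sqrt(y2·y3))) and the spray coefficients G1 = (a²·(y1)² - 2·y2·y3)·f'(x1)/(2a²·f(x1)), G2 = P·y2, G3 = P·y3 with P = (y1 + (3/(2a))·sqrt(y2·y3))·f'(x1)/f(x1), where f : ℝ → ℝ is smooth and positive. Then F is positively 1-homogeneous in (y1,y2,y3): y1·∂F/∂y1 + y2·∂F/∂y2 + y3·∂F/∂y3 = F, and ∂F/∂x1 = (∂G1/∂y1)·(∂F/∂y1) + (∂G2/∂y1)·(∂F/∂y2) + (∂G3/∂y1)·(∂F/∂y3). -/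
set_option maxHeartbeats 1000000


open Real

theorem stmt_19 (a : ℝ) (ha : a ≠ 0)
    (f : ℝ → ℝ) (hf : ContDiff ℝ (⊤ : ℕ∞) f) (hfpos : ∀ x, 0 < f x)
    (P G1 G2 G3 : ℝ → ℝ → ℝ → ℝ → ℝ) (F : ℝ → ℝ → ℝ → ℝ → ℝ)
    (hP : ∀ x1 y1 y2 y3 : ℝ, P x1 y1 y2 y3 =
      (y1 + (3 / (2 * a)) * Real.sqrt (y2 * y3)) * deriv f x1 / f x1)
    (hG1 : ∀ x1 y1 y2 y3 : ℝ, G1 x1 y1 y2 y3 =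
      (a ^ 2 * y1 ^ 2 - 2 * y2 * y3) * deriv f x1 / (2 * a ^ 2 * f x1))
    (hG2 : ∀ x1 y1 y2 y3 : ℝ, G2 x1 y1 y2 y3 = P x1 y1 y2 y3 * y2)
    (hG3 : ∀ x1 y1 y2 y3 : ℝ, G3 x1 y1 y2 y3 = P x1 y1 y2 y3 * y3)
    (hF : ∀ x1 y1 y2 y3 : ℝ, F x1 y1 y2 y3 =
      f x1 * (a * y1 + y2 * y3 / (a * y1 + 2 * Real.sqrt (y2 * y3))))
    (x1 y1 y2 y3 : ℝ) (hyy : 0 < y2 * y3)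
    (hpos : 0 < a * y1 + 2 * Real.sqrt (y2 * y3)) :
    (y1 * deriv (fun t => F x1 t y2 y3) y1 +
      y2 * deriv (fun t => F x1 y1 t y3) y2 +
      y3 * deriv (fun t => F x1 y1 y2 t) y3 = F x1 y1 y2 y3) ∧
    deriv (fun t => F t y1 y2 y3) x1 =
      deriv (fun t => G1 x1 t y2 y3) y1 * deriv (fun t => F x1 t y2 y3) y1 +
      deriv (fun t => G2 x1 t y2 y3) y1 * deriv (fun t => F x1 y1 t y3) y2 +
      deriv (fun t => G3 x1 t y2 y3) y1 * deriv (fun t => F x1 y1 y2 t) y3 := by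
  have hfne : f x1 ≠ 0 := (hfpos x1).ne'
  have hQ : a * y1 + 2 * Real.sqrt (y2 * y3) ≠ 0 := ne_of_gt hpos
  have hy2 : y2 ≠ 0 := by
    rintro rfl; simp at hyy
  have hsne : Real.sqrt (y2 * y3) ≠ 0 := (Real.sqrt_pos.2 hyy).ne'
  have hs2 : Real.sqrt (y2 * y3) ^ 2 = y2 * y3 := Real.sq_sqrt hyy.le
  -- derivative of F in the y1 direction
  have hfun1 : (fun t => F x1 t y2 y3)
      = fun t => f x1 * (a * t + y2 * y3 / (a * t + 2 * Real.sqrt (y2 * y3))) :=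
    funext fun t => hF x1 t y2 y3
  have h1 : HasDerivAt (fun t : ℝ => a * t) a y1 := by
    simpa using (hasDerivAt_id y1).const_mul a
  have hden1 : HasDerivAt (fun t => a * t + 2 * Real.sqrt (y2 * y3)) a y1 :=
    h1.add_const _
  have h2 : HasDerivAt (fun t => y2 * y3 / (a * t + 2 * Real.sqrt (y2 * y3)))
      ((0 * (a * y1 + 2 * Real.sqrt (y2 * y3)) - y2 * y3 * a)
        / (a * y1 + 2 * Real.sqrt (y2 * y3)) ^ 2) y1 :=
    (hasDerivAt_const y1 (y2 * y3)).div hden1 hQ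
  have hd1 : deriv (fun t => F x1 t y2 y3) y1
      = f x1 * (a + (0 * (a * y1 + 2 * Real.sqrt (y2 * y3)) - y2 * y3 * a)
        / (a * y1 + 2 * Real.sqrt (y2 * y3)) ^ 2) := by
    rw [hfun1]; exact (((h1.add h2)).const_mul (f x1)).deriv
  -- derivative of F in the y2 direction
  have hfun2 : (fun t => F x1 y1 t y3)
      = fun t => f x1 * (a * y1 + t * y3 / (a * y1 + 2 * Real.sqrt (t * y3))) :=
    funext fun t => hF x1 y1 t y3
  have hsq2 : HasDerivAt (fun t => Real.sqrt (t * y3))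
      (1 / (2 * Real.sqrt (y2 * y3)) * (1 * y3)) y2 :=
    (Real.hasDerivAt_sqrt hyy.ne').comp y2 ((hasDerivAt_id y2).mul_const y3)
  have hnum2 : HasDerivAt (fun t : ℝ => t * y3) (1 * y3) y2 :=
    (hasDerivAt_id y2).mul_const y3
  have hden2 : HasDerivAt (fun t => a * y1 + 2 * Real.sqrt (t * y3))
      (2 * (1 / (2 * Real.sqrt (y2 * y3)) * (1 * y3))) y2 :=
    (hsq2.const_mul 2).const_add (a * y1)
  have hd2 : deriv (fun t => F x1 y1 t y3) y2
      = f x1 * (0 + (1 * y3 * (a * y1 + 2 * Real.sqrt (y2 * y3))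
          - y2 * y3 * (2 * (1 / (2 * Real.sqrt (y2 * y3)) * (1 * y3))))
        / (a * y1 + 2 * Real.sqrt (y2 * y3)) ^ 2) := by
    rw [hfun2]
    exact (((hasDerivAt_const y2 (a * y1)).add (hnum2.div hden2 hQ)).const_mul (f x1)).deriv
  -- derivative of F in the y3 direction
  have hfun3 : (fun t => F x1 y1 y2 t)
      = fun t => f x1 * (a * y1 + y2 * t / (a * y1 + 2 * Real.sqrt (y2 * t))) :=
    funext fun t => hF x1 y1 y2 t
  have hsq3 : HasDerivAt (fun t => Real.sqrt (y2 * t))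
      (1 / (2 * Real.sqrt (y2 * y3)) * (y2 * 1)) y3 :=
    (Real.hasDerivAt_sqrt hyy.ne').comp y3 ((hasDerivAt_id y3).const_mul y2)
  have hnum3 : HasDerivAt (fun t : ℝ => y2 * t) (y2 * 1) y3 :=
    (hasDerivAt_id y3).const_mul y2
  have hden3 : HasDerivAt (fun t => a * y1 + 2 * Real.sqrt (y2 * t))
      (2 * (1 / (2 * Real.sqrt (y2 * y3)) * (y2 * 1))) y3 :=
    (hsq3.const_mul 2).const_add (a * y1)
  have hd3 : deriv (fun t => F x1 y1 y2 t) y3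
      = f x1 * (0 + (y2 * 1 * (a * y1 + 2 * Real.sqrt (y2 * y3))
          - y2 * y3 * (2 * (1 / (2 * Real.sqrt (y2 * y3)) * (y2 * 1))))
        / (a * y1 + 2 * Real.sqrt (y2 * y3)) ^ 2) := by
    rw [hfun3]
    exact (((hasDerivAt_const y3 (a * y1)).add (hnum3.div hden3 hQ)).const_mul (f x1)).deriv
  -- derivative of F in the x1 direction
  have hfunx : (fun t => F t y1 y2 y3)
      = fun t => f t * (a * y1 + y2 * y3 / (a * y1 + 2 * Real.sqrt (y2 * y3))) :=
    funext fun t => hF t y1 y2 y3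
  have hdx : deriv (fun t => F t y1 y2 y3) x1
      = deriv f x1 * (a * y1 + y2 * y3 / (a * y1 + 2 * Real.sqrt (y2 * y3))) := by
    rw [hfunx]
    exact (((hf.differentiable (by simp) x1).hasDerivAt).mul_const _).deriv
  -- derivative of G1 in y1
  have hgfun1 : (fun t => G1 x1 t y2 y3)
      = fun t => (a ^ 2 * t ^ 2 - 2 * y2 * y3) * deriv f x1 / (2 * a ^ 2 * f x1) :=
    funext fun t => hG1 x1 t y2 y3
  have hdg1 : deriv (fun t => G1 x1 t y2 y3) y1
      = a ^ 2 * (↑2 * y1 ^ 1) * deriv f x1 / (2 * a ^ 2 * f x1) := by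
    rw [hgfun1]
    exact (((((hasDerivAt_pow 2 y1).const_mul (a ^ 2)).sub_const
      (2 * y2 * y3)).mul_const (deriv f x1)).div_const (2 * a ^ 2 * f x1)).deriv
  -- derivative of G2 in y1
  have hgfun2 : (fun t => G2 x1 t y2 y3)
      = fun t => ((t + (3 / (2 * a)) * Real.sqrt (y2 * y3)) * deriv f x1 / f x1) * y2 :=
    funext fun t => by rw [hG2, hP]
  have hdg2 : deriv (fun t => G2 x1 t y2 y3) y1
      = (1 * deriv f x1 / f x1) * y2 := by
    rw [hgfun2]
    exact (((((hasDerivAt_id y1).add_const _).mul_const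
      (deriv f x1)).div_const (f x1)).mul_const y2).deriv
  -- derivative of G3 in y1
  have hgfun3 : (fun t => G3 x1 t y2 y3)
      = fun t => ((t + (3 / (2 * a)) * Real.sqrt (y2 * y3)) * deriv f x1 / f x1) * y3 :=
    funext fun t => by rw [hG3, hP]
  have hdg3 : deriv (fun t => G3 x1 t y2 y3) y1
      = (1 * deriv f x1 / f x1) * y3 := by
    rw [hgfun3]
    exact (((((hasDerivAt_id y1).add_const _).mul_const
      (deriv f x1)).div_const (f x1)).mul_const y3).deriv
  rw [hd1, hd2, hd3, hdx, hdg1, hdg2, hdg3, hF]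
  set s := Real.sqrt (y2 * y3) with hs
  have hy3eq : y3 = s ^ 2 / y2 := by
    field_simp
    linarith [hs2]
  constructor
  · rw [hy3eq]
    have : y1 * a + 2 * s ≠ 0 := by linarith
    have : a * y1 + s * 2 ≠ 0 := by linarith
    field_simp
    ring
  · rw [hy3eq]
    have : y1 * a + 2 * s ≠ 0 := by linarith
    have : a * y1 + s * 2 ≠ 0 := by linarith
    field_simp
    ring
end
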